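/- Let N = 2m+1 ≥ 3 be odd, α ≥ 0, h ∈ ℝ. With H, σ_i^x, σ_i^z, 𝒩_α, ε, U as in the context, let ρ = U D U for some diagonal matrix D, let a_1,…,a_N be real numbers and A = ∑_{i=1}^N a_i σ_i^x. Then for every t ∈ ℝ, Tr(exp(−i t H) · A · exp(i t H) · ρ) = cos(2 h t) · (∏_{j=1}^{m} cos²(2 𝒩_α ε(j) t)) · Tr(A ρ). -/

import Mathlib

open Matrix

/-- Coupling constants `ε(j) = j^{−α}`. -/
noncomputable def eps (α : ℝ) (j : ℕ) : ℝ := (j : ℝ) ^ (-α)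

/-- Kac normalization `𝒩_α = (2 ∑_{j=1}^{m} ε(j))⁻¹` for the odd ring `N = 2m+1`. -/
noncomputable def kacNorm (α : ℝ) (m : ℕ) : ℝ :=
  (2 * ∑ j ∈ Finset.Icc 1 m, eps α j)⁻¹

/-- `σ_i^z`: diagonal matrix with entry `(−1)^{s i}` at configuration `s : Fin (2m+1) → Bool`. -/
noncomputable def sigmaZ (m : ℕ) (i : Fin (2 * m + 1)) :
    Matrix (Fin (2 * m + 1) → Bool) (Fin (2 * m + 1) → Bool) ℂ :=
  Matrix.diagonal fun s => if s i then -1 else 1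

/-- `σ_i^x`: permutation matrix flipping the `i`-th bit. -/
noncomputable def sigmaX (m : ℕ) (i : Fin (2 * m + 1)) :
    Matrix (Fin (2 * m + 1) → Bool) (Fin (2 * m + 1) → Bool) ℂ :=
  fun s s' => if s' = Function.update s i (! s i) then 1 else 0

/-- `U`: the `N`-fold Kronecker product of the Hadamard matrix `(1/√2)[[1,1],[1,−1]]`. -/
noncomputable def hadamardU (m : ℕ) :
    Matrix (Fin (2 * m + 1) → Bool) (Fin (2 * m + 1) → Bool) ℂ :=
  fun s s' => ∏ i : Fin (2 * m + 1),
    (((Real.sqrt 2)⁻¹ : ℝ) : ℂ) * (if s i && s' i then -1 else 1)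

open Fin.NatCast in
/-- Emch–Radin Hamiltonian
`H = 𝒩_α ∑_{i=1}^N ∑_{j=1}^m ε(j) σ_i^z σ_{(i+j) mod N}^z − h ∑_i σ_i^z` on the odd ring
`N = 2m+1` (indices mod `N`). -/
noncomputable def Ham (α h : ℝ) (m : ℕ) :
    Matrix (Fin (2 * m + 1) → Bool) (Fin (2 * m + 1) → Bool) ℂ :=
  ((kacNorm α m : ℝ) : ℂ) • ∑ i : Fin (2 * m + 1), ∑ j ∈ Finset.Icc 1 m,
      ((eps α j : ℝ) : ℂ) • (sigmaZ m i * sigmaZ m (i + (j : Fin (2 * m + 1))))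
    - ((h : ℝ) : ℂ) • ∑ i : Fin (2 * m + 1), sigmaZ m i

/-!
Since `H` is diagonal with energies `E(s)`, the trace splits over sites into
`a_i · ∑_s e^{it(E(s⁽ⁱ⁾) − E(s))} ρ(s⁽ⁱ⁾, s)`, where `s⁽ⁱ⁾` is `s` with spin `i` flipped, and for
`ρ = U D U` the entry `ρ(s⁽ⁱ⁾, s)` does not depend on `s`. On the odd ring every site `k ≠ i` is
`i ± j` for exactly one `j ∈ [1, m]`, so flipping spin `i` costs
`−2σ_i (𝒩_α ∑_j ε(j)(σ_{i+j} + σ_{i−j}) − h)`. After the gauge change `σ_k ↦ σ_i σ_k` (`k ≠ i`)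
this is a sum of single-spin terms, and the sum over configurations factorizes into
`2 cos(2ht) ∏_j (2 cos(2𝒩_α ε(j) t))²`.
-/

namespace EmchRadin

open Matrix Finset Complex

def spin (b : Bool) : ℂ := if b then -1 else 1

@[simp] lemma spin_false : spin false = 1 := rfl

@[simp] lemma spin_true : spin true = -1 := rfl

lemma spin_not (b : Bool) : spin (!b) = -spin b := by cases b <;> simp

lemma spin_xor (a b : Bool) : spin (xor a b) = spin a * spin b := by
  cases a <;> cases b <;> simp

lemma spin_mul_self (b : Bool) : spin b * spin b = 1 := by cases b <;> simp

section Spins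

variable {ι : Type*} [DecidableEq ι]

def flipAt (i : ι) (s : ι → Bool) : ι → Bool := Function.update s i (!s i)

@[simp] lemma flipAt_self (i : ι) (s : ι → Bool) : flipAt i s i = !s i := by simp [flipAt]

lemma flipAt_of_ne {i k : ι} (s : ι → Bool) (hk : k ≠ i) : flipAt i s k = s k :=
  Function.update_of_ne hk _ _

lemma sum_spin_flipAt_sub [Fintype ι] (i : ι) (s : ι → Bool) :
    ∑ k, spin (flipAt i s k) - ∑ k, spin (s k) = -2 * spin (s i) := by
  rw [← sum_sub_distrib,
    Fintype.sum_eq_single i fun k hk => by rw [flipAt_of_ne s hk, sub_self], flipAt_self, spin_not]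
  ring

/-- Turns the products `σ_i σ_k`, `k ≠ i`, into single spins. -/
def gauge (i : ι) (s : ι → Bool) : ι → Bool := fun k => if k = i then s i else xor (s i) (s k)

lemma gauge_involutive (i : ι) : Function.Involutive (gauge i) := by
  intro s
  funext k
  by_cases hk : k = i <;> simp [gauge, hk]

lemma spin_gauge (i k : ι) (s : ι → Bool) :
    spin (gauge i s k) = if k = i then spin (s i) else spin (s i) * spin (s k) := by
  unfold gauge
  split_ifs <;> simp [spin_xor]

lemma sum_exp_sum_mul_spin [Fintype ι] (θ : ι → ℂ) :
    ∑ u : ι → Bool, cexp (I * ∑ k, θ k * spin (u k)) = ∏ k, 2 * Complex.cos (θ k) := by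
  simp only [mul_sum, Complex.exp_sum]
  rw [← Fintype.prod_sum fun k b => cexp (I * (θ k * spin b))]
  refine Fintype.prod_congr _ _ fun k => ?_
  rw [Fintype.sum_bool, two_cos, spin_true, spin_false]
  ring_nf

end Spins

section OddRing

open Fin.NatCast

variable {m : ℕ}

lemma natCast_ne_zero_of_mem_Icc {j : ℕ} (hj : j ∈ Icc 1 m) : (j : Fin (2 * m + 1)) ≠ 0 := by
  obtain ⟨hj1, hj2⟩ := mem_Icc.mp hj
  intro h
  have := congrArg Fin.val h
  rw [Fin.val_natCast, Nat.mod_eq_of_lt (by omega), Fin.val_zero] at this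
  omega

lemma min_val_natCast_val_neg_natCast {j : ℕ} (hj : j ≤ m) :
    min ((j : Fin (2 * m + 1)) : ℕ) ((-(j : Fin (2 * m + 1)) : Fin (2 * m + 1)) : ℕ) = j := by
  rw [Fin.val_neg', Fin.val_natCast, Nat.mod_eq_of_lt (by omega)]
  rcases Nat.eq_zero_or_pos j with rfl | hj0
  · simp
  · rw [Nat.mod_eq_of_lt (by omega)]; omega

def ringDist (i k : Fin (2 * m + 1)) : ℕ :=
  min ((k - i : Fin (2 * m + 1)) : ℕ) ((i - k : Fin (2 * m + 1)) : ℕ)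

lemma ringDist_add_natCast (i : Fin (2 * m + 1)) {j : ℕ} (hj : j ≤ m) :
    ringDist i (i + j) = j := by
  rw [ringDist, add_sub_cancel_left, sub_add_cancel_left]
  exact min_val_natCast_val_neg_natCast hj

lemma ringDist_sub_natCast (i : Fin (2 * m + 1)) {j : ℕ} (hj : j ≤ m) :
    ringDist i (i - j) = j := by
  rw [ringDist, sub_sub_cancel_left, sub_sub_cancel, min_comm]
  exact min_val_natCast_val_neg_natCast hj

lemma prod_univ_eq_mul_prod_add_mul_sub {M : Type*} [CommMonoid M] (f : Fin (2 * m + 1) → M)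
    (i : Fin (2 * m + 1)) : ∏ k, f k = f i * ∏ j ∈ Icc 1 m, (f (i + j) * f (i - j)) := by
  set F : ℕ → M := fun x => f (i + x)
  have hrange : ∏ k, f k = ∏ x ∈ range (2 * m + 1), F x := by
    rw [← Fin.prod_univ_eq_prod_range, ← Equiv.prod_comp (Equiv.addLeft i)]
    simp [F, Fin.cast_val_eq_self]
  rw [hrange, prod_range_succ', show range (2 * m) = range (m + m) by rw [two_mul],
    prod_range_add, ← prod_range_reflect (fun x => F (m + x + 1)) m, ← prod_mul_distrib, mul_comm,
    show Icc 1 m = Ico 1 (m + 1) from rfl, prod_Ico_eq_prod_range, Nat.add_sub_cancel]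
  congr 1
  · simp [F]
  · refine prod_congr rfl fun k hk => ?_
    have hk : k < m := mem_range.mp hk
    have hneg :
        ((m + (m - 1 - k) + 1 : ℕ) : Fin (2 * m + 1)) = -((1 + k : ℕ) : Fin (2 * m + 1)) := by
      rw [eq_neg_iff_add_eq_zero, ← Nat.cast_add,
        show m + (m - 1 - k) + 1 + (1 + k) = 2 * m + 1 by omega]
      exact_mod_cast Fin.natCast_self (2 * m + 1)
    simp only [F, hneg, sub_eq_add_neg, add_comm 1 k]

lemma sum_univ_eq_add_sum_add_add_sub {M : Type*} [AddCommMonoid M] (f : Fin (2 * m + 1) → M)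
    (i : Fin (2 * m + 1)) : ∑ k, f k = f i + ∑ j ∈ Icc 1 m, (f (i + j) + f (i - j)) :=
  prod_univ_eq_mul_prod_add_mul_sub (M := Multiplicative M) f i

noncomputable def energy (α h : ℝ) (m : ℕ) (s : Fin (2 * m + 1) → Bool) : ℂ :=
  kacNorm α m * ∑ i, ∑ j ∈ Icc 1 m, eps α j * (spin (s i) * spin (s (i + j)))
    - h * ∑ i, spin (s i)

lemma Ham_eq_diagonal (α h : ℝ) (m : ℕ) : Ham α h m = diagonal (energy α h m) := by
  have hZ : ∀ i, sigmaZ m i = diagonal fun s => spin (s i) := fun _ => rfl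
  ext s s'
  by_cases hs : s = s'
  · subst hs
    simp [Ham, energy, hZ, Matrix.sum_apply, mul_sum]
  · simp [Ham, hZ, Matrix.sum_apply, hs]

lemma exp_smul_Ham (α h : ℝ) (m : ℕ) (c : ℂ) :
    NormedSpace.exp (c • Ham α h m) = diagonal fun s => cexp (c * energy α h m s) := by
  rw [Ham_eq_diagonal, ← diagonal_smul, exp_diagonal, Pi.exp_def]
  simp [Complex.exp_eq_exp_ℂ]

lemma sum_bond_flipAt_sub {j : ℕ} (hj : j ∈ Icc 1 m) (i : Fin (2 * m + 1))
    (s : Fin (2 * m + 1) → Bool) :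
    ∑ k, spin (flipAt i s k) * spin (flipAt i s (k + j)) - ∑ k, spin (s k) * spin (s (k + j))
      = -2 * spin (s i) * (spin (s (i + j)) + spin (s (i - j))) := by
  have hj0 := natCast_ne_zero_of_mem_Icc hj
  have hadd : i + j ≠ i := mt add_eq_left.mp hj0
  have hsub : i - j ≠ i := mt sub_eq_self.mp hj0
  rw [← sum_sub_distrib, Fintype.sum_eq_add i (i - j) hsub.symm]
  · rw [sub_add_cancel, flipAt_self, flipAt_of_ne s hadd, flipAt_of_ne s hsub, spin_not]
    ring
  · rintro k ⟨hki, hkj⟩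
    have hkj' : k + j ≠ i := fun h => hkj (eq_sub_of_add_eq h)
    rw [flipAt_of_ne s hki, flipAt_of_ne s hkj', sub_self]

lemma energy_flipAt_sub (α h : ℝ) (i : Fin (2 * m + 1)) (s : Fin (2 * m + 1) → Bool) :
    energy α h m (flipAt i s) - energy α h m s
      = -2 * spin (s i) * (kacNorm α m *
          ∑ j ∈ Icc 1 m, eps α j * (spin (s (i + j)) + spin (s (i - j))) - h) := by
  have hbonds : ∑ j ∈ Icc 1 m, eps α j * ∑ k, spin (flipAt i s k) * spin (flipAt i s (k + j))
      - ∑ j ∈ Icc 1 m, eps α j * ∑ k, spin (s k) * spin (s (k + j))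
      = -2 * spin (s i) * ∑ j ∈ Icc 1 m, eps α j * (spin (s (i + j)) + spin (s (i - j))) := by
    rw [← sum_sub_distrib, mul_sum]
    refine sum_congr rfl fun j hj => ?_
    rw [← mul_sub, sum_bond_flipAt_sub hj]
    ring
  simp only [energy, sum_comm (s := univ) (t := Icc 1 m), ← mul_sum]
  linear_combination (kacNorm α m : ℂ) * hbonds - h * sum_spin_flipAt_sub i s

/-- Phase carried by `σ_k` after the gauge change at `i`: the field at `k = i`, the bond `(i, k)`
elsewhere. -/
noncomputable def flipPhase (α h t : ℝ) (i k : Fin (2 * m + 1)) : ℝ :=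
  if k = i then 2 * h * t else -(2 * kacNorm α m * eps α (ringDist i k) * t)

lemma mul_energy_flipAt_sub (α h t : ℝ) (i : Fin (2 * m + 1)) (s : Fin (2 * m + 1) → Bool) :
    t * (energy α h m (flipAt i s) - energy α h m s)
      = ∑ k, (flipPhase α h t i k : ℂ) * spin (gauge i s k) := by
  have hpair : ∀ j ∈ Icc 1 m,
      (flipPhase α h t i (i + j) : ℂ) * spin (gauge i s (i + j))
        + flipPhase α h t i (i - j) * spin (gauge i s (i - j))
      = -(2 * kacNorm α m * t) * spin (s i) *
          (eps α j * (spin (s (i + j)) + spin (s (i - j)))) := by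
    intro j hj
    have hj0 := natCast_ne_zero_of_mem_Icc hj
    have hjm := (mem_Icc.mp hj).2
    simp only [flipPhase, spin_gauge, if_neg (mt add_eq_left.mp hj0),
      if_neg (mt sub_eq_self.mp hj0), ringDist_add_natCast i hjm, ringDist_sub_natCast i hjm]
    push_cast
    ring
  rw [energy_flipAt_sub, sum_univ_eq_add_sum_add_add_sub _ i, sum_congr rfl hpair, ← mul_sum]
  simp only [flipPhase, spin_gauge]
  push_cast
  ring

lemma sum_exp_energy_flipAt_sub (α h t : ℝ) (i : Fin (2 * m + 1)) :
    ∑ s, cexp (-(I * t) * energy α h m s) * cexp (I * t * energy α h m (flipAt i s))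
      = 2 ^ (2 * m + 1) * ((Real.cos (2 * h * t) *
          ∏ j ∈ Icc 1 m, Real.cos (2 * kacNorm α m * eps α j * t) ^ 2 : ℝ) : ℂ) := by
  have hphase : ∀ s, cexp (-(I * t) * energy α h m s) * cexp (I * t * energy α h m (flipAt i s))
      = cexp (I * ∑ k, (flipPhase α h t i k : ℂ) * spin (gauge i s k)) := by
    intro s
    rw [← Complex.exp_add, ← mul_energy_flipAt_sub]
    ring_nf
  have hpair : ∀ j ∈ Icc 1 m,
      2 * Complex.cos (flipPhase α h t i (i + j)) * (2 * Complex.cos (flipPhase α h t i (i - j)))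
      = 4 * (Real.cos (2 * kacNorm α m * eps α j * t) : ℂ) ^ 2 := by
    intro j hj
    have hj0 := natCast_ne_zero_of_mem_Icc hj
    have hjm := (mem_Icc.mp hj).2
    simp only [flipPhase, if_neg (mt add_eq_left.mp hj0), if_neg (mt sub_eq_self.mp hj0),
      ringDist_add_natCast i hjm, ringDist_sub_natCast i hjm, Real.cos_neg, ← Complex.ofReal_cos]
    ring
  simp_rw [hphase]
  rw [(gauge_involutive i).bijective.sum_comp
      fun u => cexp (I * ∑ k, (flipPhase α h t i k : ℂ) * spin (u k)), sum_exp_sum_mul_spin,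
    prod_univ_eq_mul_prod_add_mul_sub _ i, prod_congr rfl hpair,
    prod_mul_distrib, prod_const, Nat.card_Icc, Nat.add_sub_cancel]
  simp only [flipPhase, ← Complex.ofReal_cos]
  push_cast
  rw [show (4 : ℂ) = 2 ^ 2 by norm_num, ← pow_mul]
  ring

lemma trace_sigmaX_mul (i : Fin (2 * m + 1))
    (M : Matrix (Fin (2 * m + 1) → Bool) (Fin (2 * m + 1) → Bool) ℂ) :
    trace (sigmaX m i * M) = ∑ s, M (flipAt i s) s := by
  simp [trace, mul_apply, sigmaX, flipAt]

lemma trace_diagonal_mul_sigmaX_mul_diagonal_mul (i : Fin (2 * m + 1))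
    (p q : (Fin (2 * m + 1) → Bool) → ℂ)
    (M : Matrix (Fin (2 * m + 1) → Bool) (Fin (2 * m + 1) → Bool) ℂ) :
    trace (diagonal p * sigmaX m i * diagonal q * M)
      = ∑ s, p s * q (flipAt i s) * M (flipAt i s) s := by
  rw [Matrix.mul_assoc, Matrix.mul_assoc, trace_mul_comm, Matrix.mul_assoc, trace_sigmaX_mul]
  refine sum_congr rfl fun s _ => ?_
  rw [mul_diagonal, diagonal_mul]
  ring

lemma hadamardU_apply (x y : Fin (2 * m + 1) → Bool) :
    hadamardU m x y = ∏ l, ((√2)⁻¹ : ℝ) * spin (x l && y l) :=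
  rfl

lemma hadamardU_flipAt_mul_hadamardU (i : Fin (2 * m + 1)) (s k : Fin (2 * m + 1) → Bool) :
    hadamardU m (flipAt i s) k * hadamardU m k s = 2⁻¹ ^ (2 * m + 1) * spin (k i) := by
  have hsqrt : ((√2)⁻¹ : ℝ) * ((√2)⁻¹ : ℝ) = (2⁻¹ : ℂ) := by
    rw [← Complex.ofReal_mul, ← mul_inv, Real.mul_self_sqrt zero_le_two]
    norm_num
  have hfactor : ∀ l,
      ((√2)⁻¹ : ℝ) * spin (flipAt i s l && k l) * (((√2)⁻¹ : ℝ) * spin (k l && s l))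
        = 2⁻¹ * if l = i then spin (k i) else 1 := by
    intro l
    rw [mul_mul_mul_comm, hsqrt]
    split_ifs with hl
    · subst hl
      rw [flipAt_self]
      cases k l <;> cases s l <;> simp
    · rw [flipAt_of_ne s hl, Bool.and_comm, spin_mul_self]
  rw [hadamardU_apply, hadamardU_apply, ← prod_mul_distrib, prod_congr rfl fun l _ => hfactor l,
    prod_mul_distrib, prod_const, prod_ite_eq', if_pos (mem_univ i), card_univ, Fintype.card_fin]

lemma hadamardU_mul_mul_hadamardU_apply_flipAt
    {D : Matrix (Fin (2 * m + 1) → Bool) (Fin (2 * m + 1) → Bool) ℂ} (hD : D.IsDiag)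
    (i : Fin (2 * m + 1)) (s : Fin (2 * m + 1) → Bool) :
    (hadamardU m * D * hadamardU m) (flipAt i s) s
      = 2⁻¹ ^ (2 * m + 1) * ∑ k, D k k * spin (k i) := by
  rw [← hD.diagonal_diag, mul_apply, mul_sum]
  refine sum_congr rfl fun k _ => ?_
  rw [mul_diagonal, diagonal_apply_eq, diag_apply]
  linear_combination D k k * hadamardU_flipAt_mul_hadamardU i s k

lemma trace_exp_smul_Ham_mul_sigmaX_mul_exp_smul_Ham_mul (α h t : ℝ)
    {D : Matrix (Fin (2 * m + 1) → Bool) (Fin (2 * m + 1) → Bool) ℂ} (hD : D.IsDiag)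
    (i : Fin (2 * m + 1)) :
    trace (NormedSpace.exp (-(I * t) • Ham α h m) * sigmaX m i *
        NormedSpace.exp ((I * t) • Ham α h m) * (hadamardU m * D * hadamardU m))
      = ((Real.cos (2 * h * t) *
          ∏ j ∈ Icc 1 m, Real.cos (2 * kacNorm α m * eps α j * t) ^ 2 : ℝ) : ℂ) *
        trace (sigmaX m i * (hadamardU m * D * hadamardU m)) := by
  rw [exp_smul_Ham, exp_smul_Ham, trace_diagonal_mul_sigmaX_mul_diagonal_mul, trace_sigmaX_mul]
  simp only [hadamardU_mul_mul_hadamardU_apply_flipAt hD, ← sum_mul, sum_exp_energy_flipAt_sub,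
    sum_const, card_univ, Fintype.card_fun, Fintype.card_fin, Fintype.card_bool, nsmul_eq_mul,
    Nat.cast_pow, Nat.cast_ofNat]
  ring

end OddRing

end EmchRadin

theorem stmt_0_general (m : ℕ) (α : ℝ) (h : ℝ)
    (D : Matrix (Fin (2 * m + 1) → Bool) (Fin (2 * m + 1) → Bool) ℂ) (hD : D.IsDiag)
    (a : Fin (2 * m + 1) → ℝ) (t : ℝ) :
    Matrix.trace
      (NormedSpace.exp ((-(Complex.I * (t : ℂ))) • Ham α h m) *
        (∑ i : Fin (2 * m + 1), ((a i : ℝ) : ℂ) • sigmaX m i) *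
        NormedSpace.exp ((Complex.I * (t : ℂ)) • Ham α h m) *
        (hadamardU m * D * hadamardU m)) =
      ((Real.cos (2 * h * t) *
          ∏ j ∈ Finset.Icc 1 m, Real.cos (2 * kacNorm α m * eps α j * t) ^ 2 : ℝ) : ℂ) *
        Matrix.trace
          ((∑ i : Fin (2 * m + 1), ((a i : ℝ) : ℂ) • sigmaX m i) *
            (hadamardU m * D * hadamardU m)) := by
  simp only [Matrix.sum_mul, Matrix.trace_sum, Matrix.mul_smul, Matrix.smul_mul, Matrix.trace_smul,
    EmchRadin.trace_exp_smul_Ham_mul_sigmaX_mul_exp_smul_Ham_mul α h t hD, smul_eq_mul,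
    Finset.mul_sum]
  exact Finset.sum_congr rfl fun i _ => mul_left_comm _ _ _

/-- exact time evolution. For `N = 2m+1 ≥ 3` odd, `α ≥ 0`, `h ∈ ℝ`, an initial
state `ρ = U D U` with `D` diagonal, and `A = ∑_i a_i σ_i^x`, one has for all real `t`
`Tr(e^{−itH} A e^{itH} ρ) = cos(2ht) ⬝ ∏_{j=1}^m cos²(2 𝒩_α ε(j) t) ⬝ Tr(A ρ)`. -/
theorem stmt_0 (m : ℕ) (hm : 1 ≤ m) (α : ℝ) (hα : 0 ≤ α) (h : ℝ)
    (D : Matrix (Fin (2 * m + 1) → Bool) (Fin (2 * m + 1) → Bool) ℂ) (hD : D.IsDiag)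
    (a : Fin (2 * m + 1) → ℝ) (t : ℝ) :
    Matrix.trace
      (NormedSpace.exp ((-(Complex.I * (t : ℂ))) • Ham α h m) *
        (∑ i : Fin (2 * m + 1), ((a i : ℝ) : ℂ) • sigmaX m i) *
        NormedSpace.exp ((Complex.I * (t : ℂ)) • Ham α h m) *
        (hadamardU m * D * hadamardU m)) =
      ((Real.cos (2 * h * t) *
          ∏ j ∈ Finset.Icc 1 m, Real.cos (2 * kacNorm α m * eps α j * t) ^ 2 : ℝ) : ℂ) *
        Matrix.trace
          ((∑ i : Fin (2 * m + 1), ((a i : ℝ) : ℂ) • sigmaX m i) *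
            (hadamardU m * D * hadamardU m)) :=
  stmt_0_general m α h D hD a t
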